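/- For every finite simple graph G on n vertices and every positive integer s, the sum over i = 1, …, n of λ_i(G)^{2s} is at most the sum over vertices v of G of λ_1(B_G(v, s))^{2s}. -/

import Mathlib

open Matrix

attribute [local instance] Classical.propDecidable

/-- The adjacency matrix of a finite simple graph, with real entries. -/
noncomputable def adjMat {V : Type*} [Fintype V] (G : SimpleGraph V) : Matrix V V ℝ :=
  Matrix.of fun a b => if G.Adj a b then 1 else 0

lemma adjMat_isHermitian {V : Type*} [Fintype V] (G : SimpleGraph V) :
    (adjMat G).IsHermitian := by
  show (adjMat G)ᴴ = adjMat G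
  ext i j
  simp only [adjMat, Matrix.conjTranspose_apply, Matrix.of_apply, star_trivial]
  rw [SimpleGraph.adj_comm]

/-- The `k`-th largest eigenvalue (`1`-indexed, counted with multiplicity) of the
adjacency matrix of a finite simple graph. -/
noncomputable def graphEigNth {V : Type*} [Fintype V] (G : SimpleGraph V) (k : ℕ) : ℝ :=
  ((Finset.univ.val.map (adjMat_isHermitian G).eigenvalues).sort (· ≤ ·)).getD
    (Fintype.card V - k) 0

/-! The left-hand side is the trace of `A ^ (2 * s)`, i.e. the sum over `v` of the number of
closed walks of length `2 * s` at `v`. Such a walk never gets farther than `s` from `v`, so it is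
also a closed walk of the ball `B = B_G(v, s)`, and `(A_B ^ (2 * s)) v v ≤ λ₁(B) ^ (2 * s)` by the
spectral decomposition of `A_B`, because (Perron–Frobenius) every eigenvalue of the nonnegative
matrix `A_B` has absolute value at most `λ₁(B)`. -/

namespace Matrix.IsHermitian

variable {n : Type*} [Fintype n] [DecidableEq n] {A : Matrix n n ℝ} (hA : A.IsHermitian)

theorem pow_eq_conj_diagonal (k : ℕ) :
    A ^ k = (hA.eigenvectorUnitary : Matrix n n ℝ) * diagonal (hA.eigenvalues ^ k) *
      star (hA.eigenvectorUnitary : Matrix n n ℝ) := by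
  conv_lhs => rw [hA.spectral_theorem, ← map_pow, diagonal_pow]
  rfl

theorem trace_pow (k : ℕ) : (A ^ k).trace = ∑ j, hA.eigenvalues j ^ k := by
  rw [hA.pow_eq_conj_diagonal, trace_mul_cycle, Unitary.coe_star_mul_self, one_mul, trace_diagonal]
  rfl

theorem pow_apply (k : ℕ) (x y : n) :
    (A ^ k) x y = ∑ j, hA.eigenvalues j ^ k *
      (hA.eigenvectorUnitary x j * hA.eigenvectorUnitary y j) := by
  rw [hA.pow_eq_conj_diagonal, mul_apply]
  refine Finset.sum_congr rfl fun j _ => ?_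
  simp only [mul_diagonal, star_apply, star_trivial, Pi.pow_apply]
  ring

theorem sum_eigenvectorUnitary_sq (x : n) : ∑ j, hA.eigenvectorUnitary x j ^ 2 = 1 := by
  have := congr_fun₂ (Unitary.coe_mul_star_self hA.eigenvectorUnitary) x x
  simpa [mul_apply, sq] using this

theorem pow_apply_self_le {c : ℝ} (hc : ∀ j, |hA.eigenvalues j| ≤ c) (k : ℕ) (x : n) :
    (A ^ k) x x ≤ c ^ k :=
  calc (A ^ k) x x = ∑ j, hA.eigenvalues j ^ k * hA.eigenvectorUnitary x j ^ 2 := by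
        simp only [hA.pow_apply, sq]
    _ ≤ ∑ j, c ^ k * hA.eigenvectorUnitary x j ^ 2 := by
        refine Finset.sum_le_sum fun j _ => mul_le_mul_of_nonneg_right ?_ (sq_nonneg _)
        calc hA.eigenvalues j ^ k ≤ |hA.eigenvalues j| ^ k := (le_abs_self _).trans (abs_pow _ _).le
          _ ≤ c ^ k := by gcongr; exact hc j
    _ = c ^ k := by rw [← Finset.mul_sum, hA.sum_eigenvectorUnitary_sq, mul_one]

theorem dotProduct_mulVec_le {c : ℝ} (hc : ∀ j, hA.eigenvalues j ≤ c) (y : n → ℝ) :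
    y ⬝ᵥ A *ᵥ y ≤ c * (y ⬝ᵥ y) := by
  set U : Matrix n n ℝ := (hA.eigenvectorUnitary : Matrix n n ℝ)
  have hUU : U * star U = 1 := mem_unitaryGroup_iff.mp hA.eigenvectorUnitary.2
  set z := star U *ᵥ y
  have hyU : y ᵥ* U = z := by
    rw [← mulVec_transpose, ← conjTranspose_eq_transpose_of_trivial, ← star_eq_conjTranspose]
  have hz : z ⬝ᵥ z = y ⬝ᵥ y := by
    nth_rw 1 [← hyU]
    rw [← dotProduct_mulVec, mulVec_mulVec, hUU, one_mulVec]
  have hA' : A = U * diagonal hA.eigenvalues * star U := by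
    conv_lhs => rw [hA.spectral_theorem]
    rfl
  calc y ⬝ᵥ A *ᵥ y = y ⬝ᵥ (U * diagonal hA.eigenvalues * star U) *ᵥ y := by rw [← hA']
    _ = ∑ j, hA.eigenvalues j * z j ^ 2 := by
        rw [← mulVec_mulVec, ← mulVec_mulVec, dotProduct_mulVec, hyU]
        simp only [dotProduct, mulVec_diagonal, sq, mul_left_comm]
        rfl
    _ ≤ ∑ j, c * z j ^ 2 :=
        Finset.sum_le_sum fun j _ => mul_le_mul_of_nonneg_right (hc j) (sq_nonneg _)
    _ = c * (y ⬝ᵥ y) := by rw [← hz, ← Finset.mul_sum]; simp [dotProduct, sq]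

theorem abs_eigenvalues_le_of_nonneg {c : ℝ} (hnn : ∀ i k, 0 ≤ A i k)
    (hc : ∀ j, hA.eigenvalues j ≤ c) (j : n) : |hA.eigenvalues j| ≤ c := by
  set u : n → ℝ := ⇑(hA.eigenvectorBasis j)
  have hu : u ⬝ᵥ u = 1 := by
    have h := real_inner_self_eq_norm_sq (hA.eigenvectorBasis j)
    rw [hA.eigenvectorBasis.orthonormal.1 j, EuclideanSpace.inner_eq_star_dotProduct] at h
    simpa [u] using h
  calc |hA.eigenvalues j| = |u ⬝ᵥ A *ᵥ u| := by simpa using congrArg abs (hA.eigenvalues_eq j)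
    _ ≤ (|u|) ⬝ᵥ A *ᵥ |u| := by
        simp only [dotProduct, mulVec, Finset.mul_sum]
        refine (Finset.abs_sum_le_sum_abs _ _).trans (Finset.sum_le_sum fun i _ => ?_)
        refine (Finset.abs_sum_le_sum_abs _ _).trans_eq (Finset.sum_congr rfl fun k _ => ?_)
        simp [abs_mul, abs_of_nonneg (hnn i k), mul_left_comm]
    _ ≤ c * ((|u|) ⬝ᵥ |u|) := hA.dotProduct_mulVec_le hc _
    _ = c := by rw [show |u| ⬝ᵥ |u| = 1 by simpa [dotProduct] using hu, mul_one]

end Matrix.IsHermitian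

namespace SimpleGraph

variable {V : Type*} {G : SimpleGraph V}

theorem Walk.exists_two_mul_length_le_of_mem_support {v w : V} (p : G.Walk v v)
    (hw : w ∈ p.support) : ∃ q : G.Walk v w, 2 * q.length ≤ p.length := by
  obtain ⟨q, r, rfl⟩ := p.mem_support_iff_exists_append.mp hw
  rw [Walk.length_append]
  rcases le_total q.length r.length with h | h
  · exact ⟨q, by omega⟩
  · exact ⟨r.reverse, by rw [Walk.length_reverse]; omega⟩

theorem adjMatrix_pow_apply_le_adjMatrix_induce_pow {α : Type*} [Semiring α] [PartialOrder α]
    [IsOrderedRing α] [Fintype V] [DecidableEq V] [DecidableRel G.Adj] (S : Set V) [Fintype S]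
    [DecidableRel (G.induce S).Adj] (k : ℕ) {u v : V} (hu : u ∈ S) (hv : v ∈ S)
    (hS : ∀ p : G.Walk u v, p.length = k → ∀ w ∈ p.support, w ∈ S) :
    (G.adjMatrix α ^ k) u v ≤ ((G.induce S).adjMatrix α ^ k) ⟨u, hu⟩ ⟨v, hv⟩ := by
  simp only [adjMatrix_pow_apply_eq_card_walk]
  refine Nat.mono_cast (Fintype.card_le_of_injective
    (fun p => ⟨p.1.induce S (hS p.1 p.2), ?_⟩) fun p q hpq => ?_)
  · rw [Set.mem_ofPred_eq, ← Walk.length_map (Embedding.induce S).toHom, Walk.map_induce]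
    exact p.2
  · have h := congrArg (fun r => r.1.map (Embedding.induce S).toHom) hpq
    simp only [Walk.map_induce] at h
    exact Subtype.ext h

end SimpleGraph

section adjMat

variable {V : Type*} {G : SimpleGraph V}

theorem adjMat_eq_adjMatrix [DecidableRel G.Adj] [Fintype V] : adjMat G = G.adjMatrix ℝ := by
  ext u v
  simp only [adjMat, of_apply, SimpleGraph.adjMatrix_apply]
  congr

theorem adjMat_nonneg [Fintype V] (u v : V) : 0 ≤ adjMat G u v := by
  simp only [adjMat, of_apply]
  split <;> norm_num

theorem eigenvalues_le_graphEigNth_one [Fintype V] [DecidableEq V] (j : V) :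
    (adjMat_isHermitian G).eigenvalues j ≤ graphEigNth G 1 := by
  -- `graphEigNth` was elaborated with classical decidable equality.
  obtain rfl : ‹DecidableEq V› = fun a b => Classical.propDecidable (a = b) :=
    Subsingleton.elim _ _
  set l := (Finset.univ.val.map (adjMat_isHermitian G).eigenvalues).sort (· ≤ ·)
  have hmem : (adjMat_isHermitian G).eigenvalues j ∈ l := by simp [l]
  have hlen : l.length = Fintype.card V := by simp [l]
  unfold graphEigNth
  rw [← hlen, List.getD_eq_getElem _ _ (by grind), ← List.getLast_eq_getElem]
  exact (Multiset.pairwise_sort _ _).rel_getLast hmem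

theorem adjMat_pow_apply_self_le_graphEigNth_one_pow [Fintype V] [DecidableEq V] (k : ℕ)
    (x : V) : (adjMat G ^ k) x x ≤ graphEigNth G 1 ^ k :=
  have hA := adjMat_isHermitian G
  hA.pow_apply_self_le
    (hA.abs_eigenvalues_le_of_nonneg adjMat_nonneg eigenvalues_le_graphEigNth_one) k x

end adjMat

theorem local_vs_global_spectra_general (n s : ℕ) (G : SimpleGraph (Fin n)) :
    ∑ i : Fin n, (adjMat_isHermitian G).eigenvalues i ^ (2 * s) ≤
      ∑ v : Fin n,
        graphEigNth (G.induce {w : Fin n | ∃ p : G.Walk v w, p.length ≤ s}) 1 ^ (2 * s) := by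
  rw [← (adjMat_isHermitian G).trace_pow, trace]
  refine Finset.sum_le_sum fun v _ => ?_
  set S := {w : Fin n | ∃ p : G.Walk v w, p.length ≤ s}
  have hv : v ∈ S := ⟨.nil, Nat.zero_le s⟩
  have hclosed : ∀ p : G.Walk v v, p.length = 2 * s → ∀ w ∈ p.support, w ∈ S := by
    intro p hp w hw
    obtain ⟨q, hq⟩ := p.exists_two_mul_length_le_of_mem_support hw
    exact ⟨q, by omega⟩
  calc (adjMat G ^ (2 * s)) v v ≤ (adjMat (G.induce S) ^ (2 * s)) ⟨v, hv⟩ ⟨v, hv⟩ := by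
        simpa only [adjMat_eq_adjMatrix] using
          SimpleGraph.adjMatrix_pow_apply_le_adjMatrix_induce_pow S (2 * s) hv hv hclosed
    _ ≤ _ := adjMat_pow_apply_self_le_graphEigNth_one_pow _ _

/-- **Local vs global spectra.** For every graph `G` on `n` vertices and every positive
integer `s`, `∑_{i=1}^n λ_i(G)^{2s} ≤ ∑_{v ∈ V(G)} λ₁(B_G(v,s))^{2s}`, where
`B_G(v,s)` is the subgraph induced by the vertices within distance `s` of `v`. -/
theorem local_vs_global_spectra (n s : ℕ) (hs : 1 ≤ s) (G : SimpleGraph (Fin n)) :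
    ∑ i : Fin n, (adjMat_isHermitian G).eigenvalues i ^ (2 * s) ≤
      ∑ v : Fin n,
        graphEigNth (G.induce {w : Fin n | ∃ p : G.Walk v w, p.length ≤ s}) 1 ^ (2 * s) :=
  local_vs_global_spectra_general n s G
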